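/- There exists C > 0 such that for every finitely supported f : ℕ×V₂ → ℂ: ‖(Λ^f)^{−2}(A_{G^f}(A_{G^f} f))‖_{ℓ²(ℕ×V₂, m^f)} ≤ C·‖f‖_{ℓ²(ℕ×V₂, m^f)}, where (Λ^f)^{−2} denotes multiplication by (x + 1/2)^{−2} in the first variable. Hence (Λ^f)^{−2} A_{G^f}² extends to a bounded operator on ℓ²(ℕ×V₂, m^f). -/

import Mathlib

noncomputable section

open Complex

/-- `(A_ℕ f)(n) = (i/2)·((n − 1/2)·f(n−1) − (n + 1/2)·f(n+1))`, with `f(−1) = 0`. -/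
def aN (f : ℕ → ℂ) : ℕ → ℂ := fun n =>
  (I / 2) * (((n : ℂ) - 1 / 2) * (if n = 0 then 0 else f (n - 1))
    - ((n : ℂ) + 1 / 2) * f (n + 1))

/-- The gauge transform `T_{m→m'} f = (x ↦ √(m(x)/m'(x))·f(x))`. -/
def Tw {V : Type*} (m m' : V → ℝ) (f : V → ℂ) : V → ℂ :=
  fun x => (Real.sqrt (m x / m' x) : ℂ) * f x

/-- Weight of the funnel half-line: `m₁^f(n) = eⁿ`. -/
def m1F : ℕ → ℝ := fun n => Real.exp n

/-- `A_{m₁^f} := T_{1→m₁^f} ∘ A_ℕ ∘ T_{1→m₁^f}⁻¹`. -/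
def aM1F (f : ℕ → ℂ) : ℕ → ℂ :=
  Tw (fun _ => 1) m1F (aN (Tw m1F (fun _ => 1) f))

/-- `A_{G^f} := A_{m₁^f} ⊗ 1`. -/
def aGF {V₂ : Type*} (f : ℕ × V₂ → ℂ) : ℕ × V₂ → ℂ := fun v =>
  aM1F (fun n => f (n, v.2)) v.1

/-- Weight of the funnel: `m^f(x,y) = eˣ·m₂`. -/
def mF (V₂ : Type*) (m₂ : ℝ) : ℕ × V₂ → ℝ := fun v => Real.exp v.1 * m₂

/-- The ℓ²-norm with weight `m`. -/
def nrm {V : Type*} (m : V → ℝ) (f : V → ℂ) : ℝ :=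
  Real.sqrt (∑' x : V, m x * ‖f x‖ ^ 2)


/-- `(Λ^f)^{−2}`: multiplication by `(x + 1/2)^{−2}` in the first variable. -/
def lamFinv2 {V₂ : Type*} (f : ℕ × V₂ → ℂ) : ℕ × V₂ → ℂ := fun v =>
  (((v.1 : ℝ) + 1 / 2) ^ (2 : ℕ) : ℝ)⁻¹ * f v

/-- The standard (unweighted) `ℓ²` space over `V`. -/
abbrev L2 (V : Type*) := lp (fun _ : V => ℂ) 2

/-- The isometry `ℓ²(V,m) → ℓ²(V)`, `f ↦ √m·f`. -/
def emb {V : Type*} (m : V → ℝ) (f : V → ℂ) : V → ℂ :=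
  fun v => (Real.sqrt (m v) : ℂ) * f v

/-- The inverse isometry `ℓ²(V) → ℓ²(V,m)`, `g ↦ g/√m`. -/
def unemb {V : Type*} (m : V → ℝ) (g : V → ℂ) : V → ℂ :=
  fun v => g v / (Real.sqrt (m v) : ℂ)

/-!
Conjugation by the unitary `f ↦ √m · f` from `ℓ²(ℕ × V₂, m^f)` onto the unweighted `ℓ²(ℕ × V₂)`
turns `A_{G^f}` into `A_ℕ ⊗ 1`: the gauge factors `√(eⁿ)` and the constant `√m₂` cancel.
`A_ℕ²` couples `n` only to `n - 2`, `n` and `n + 2`, with coefficients of size `O((n + 1/2)²)`, so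
`|(n + 1/2)⁻² (A_ℕ² f)(n)| ≤ |f(n - 2)| + |f(n)| + |f(n + 2)|`. The shifts by `± 2` have norm at
most `1` on `ℓ²`, hence `(Λ^f)⁻² A_{G^f}²` has norm at most `3`.
-/

open Function

section Shifts

variable {α E : Type*} [NormedAddCommGroup E] {σ : α → α} {g h : α → E}

lemma norm_sq_extend_zero (g : α → E) :
    (fun a => ‖extend σ g 0 a‖ ^ 2) = extend σ (fun a => ‖g a‖ ^ 2) 0 := by
  funext a
  rw [apply_extend (fun x : E => ‖x‖ ^ 2)]
  congr 1
  funext b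
  simp

lemma summable_norm_sq_extend_zero (hσ : Injective σ) (hg : Summable fun a => ‖g a‖ ^ 2) :
    Summable fun a => ‖extend σ g 0 a‖ ^ 2 := by
  rw [norm_sq_extend_zero]
  exact (summable_extend_zero hσ).2 hg

lemma tsum_norm_sq_extend_zero (hσ : Injective σ) :
    ∑' a, ‖extend σ g 0 a‖ ^ 2 = ∑' a, ‖g a‖ ^ 2 := by
  rw [norm_sq_extend_zero, tsum_extend_zero hσ]

/-- `extend σ g 0` is the backward shift `g ∘ σ⁻¹`, extended by `0` off the range of `σ`. -/
lemma summable_norm_sq_and_tsum_le_of_norm_le_shifts (hσ : Injective σ)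
    (hg : Summable fun a => ‖g a‖ ^ 2)
    (hh : ∀ a, ‖h a‖ ≤ ‖extend σ g 0 a‖ + ‖g a‖ + ‖g (σ a)‖) :
    Summable (fun a => ‖h a‖ ^ 2) ∧ ∑' a, ‖h a‖ ^ 2 ≤ 9 * ∑' a, ‖g a‖ ^ 2 := by
  have hback := summable_norm_sq_extend_zero hσ hg
  have hfwd : Summable fun a => ‖g (σ a)‖ ^ 2 := hg.comp_injective hσ
  have hmaj : Summable fun a => 3 * (‖extend σ g 0 a‖ ^ 2 + ‖g a‖ ^ 2 + ‖g (σ a)‖ ^ 2) :=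
    ((hback.add hg).add hfwd).mul_left 3
  have hpt : ∀ a, ‖h a‖ ^ 2 ≤ 3 * (‖extend σ g 0 a‖ ^ 2 + ‖g a‖ ^ 2 + ‖g (σ a)‖ ^ 2) := by
    intro a
    have := pow_le_pow_left₀ (norm_nonneg _) (hh a) 2
    nlinarith [sq_nonneg (‖extend σ g 0 a‖ - ‖g a‖), sq_nonneg (‖g a‖ - ‖g (σ a)‖),
      sq_nonneg (‖extend σ g 0 a‖ - ‖g (σ a)‖)]
  have hs : Summable fun a => ‖h a‖ ^ 2 := hmaj.of_nonneg_of_le (fun _ => by positivity) hpt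
  refine ⟨hs, ?_⟩
  calc ∑' a, ‖h a‖ ^ 2
      ≤ ∑' a, 3 * (‖extend σ g 0 a‖ ^ 2 + ‖g a‖ ^ 2 + ‖g (σ a)‖ ^ 2) := hs.tsum_le_tsum hpt hmaj
    _ = 3 * (∑' a, ‖extend σ g 0 a‖ ^ 2 + ∑' a, ‖g a‖ ^ 2 + ∑' a, ‖g (σ a)‖ ^ 2) := by
      rw [tsum_mul_left, (hback.add hg).tsum_add hfwd, hback.tsum_add hg]
    _ ≤ 3 * (∑' a, ‖g a‖ ^ 2 + ∑' a, ‖g a‖ ^ 2 + ∑' a, ‖g a‖ ^ 2) := by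
      rw [tsum_norm_sq_extend_zero hσ]
      have := tsum_comp_le_tsum_of_inj hg (fun _ => by positivity) hσ
      simp only [comp_def] at this
      linarith
    _ = 9 * ∑' a, ‖g a‖ ^ 2 := by ring

end Shifts

section L2

variable {α E : Type*} [NormedAddCommGroup E]

lemma memℓp_two_iff_summable_norm_sq {f : α → E} :
    Memℓp f 2 ↔ Summable fun a => ‖f a‖ ^ 2 := by
  rw [memℓp_gen_iff (by norm_num)]
  simp only [ENNReal.toReal_ofNat, Real.rpow_two]

lemma lp.norm_sq_eq_tsum_norm_sq (f : lp (fun _ : α => E) 2) : ‖f‖ ^ 2 = ∑' a, ‖f a‖ ^ 2 := by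
  simpa only [ENNReal.toReal_ofNat, Real.rpow_two] using lp.norm_rpow_eq_tsum (by norm_num) f

end L2

lemma extend_prodMap_id_apply {α β γ E : Type*} [Zero E] {f : α → β} (hf : Injective f)
    (g : α × γ → E) (b : β) (y : γ) :
    extend (Prod.map f id) g 0 (b, y) = extend f (fun a => g (a, y)) 0 b := by
  by_cases hb : ∃ a, f a = b
  · obtain ⟨a, rfl⟩ := hb
    rw [hf.extend_apply]
    exact (hf.prodMap injective_id).extend_apply g 0 (a, y)
  · rw [extend_apply' _ _ _ hb, extend_apply']
    · rfl
    · rintro ⟨⟨a, y'⟩, hab⟩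
      exact hb ⟨a, congrArg Prod.fst hab⟩

lemma emb_unemb {V : Type*} {m : V → ℝ} (hm : ∀ v, 0 < m v) (g : V → ℂ) :
    emb m (unemb m g) = g := by
  funext v
  have : ((√(m v) : ℝ) : ℂ) ≠ 0 := Complex.ofReal_ne_zero.2 (Real.sqrt_pos.2 (hm v)).ne'
  simp only [emb, unemb]
  field_simp

lemma nrm_eq_sqrt_tsum_norm_emb_sq {V : Type*} {m : V → ℝ} (hm : ∀ v, 0 ≤ m v) (f : V → ℂ) :
    nrm m f = √(∑' v, ‖emb m f v‖ ^ 2) := by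
  simp only [nrm, emb, norm_mul, Complex.norm_real, Real.norm_eq_abs,
    abs_of_nonneg (Real.sqrt_nonneg _), mul_pow, Real.sq_sqrt (hm _)]

lemma norm_natCast_add_of_nonneg (n : ℕ) {r : ℝ} (hr : 0 ≤ r) : ‖(n : ℂ) + r‖ = n + r := by
  rw [← Complex.ofReal_natCast, ← Complex.ofReal_add, Complex.norm_of_nonneg (by positivity)]

lemma norm_aN_zero (f : ℕ → ℂ) : ‖aN f 0‖ = ‖f 1‖ / 4 := by
  simp only [aN, CharP.cast_eq_zero, one_div, zero_sub, ↓reduceIte, mul_zero, zero_add, mul_neg,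
    norm_neg, Complex.norm_mul, Complex.norm_div, norm_I, norm_ofNat, norm_inv]
  ring

lemma norm_aN_succ_le (f : ℕ → ℂ) (n : ℕ) :
    ‖aN f (n + 1)‖ ≤ ((n : ℝ) + 3 / 2) / 2 * (‖f n‖ + ‖f (n + 2)‖) := by
  have hA : aN f (n + 1)
      = I / 2 * (((n : ℂ) + (1 / 2 : ℝ)) * f n - ((n : ℂ) + (3 / 2 : ℝ)) * f (n + 2)) := by
    simp only [aN, Nat.add_one_ne_zero, if_false, Nat.add_sub_cancel]
    push_cast
    ring
  have hsub := norm_sub_le (((n : ℂ) + (1 / 2 : ℝ)) * f n) (((n : ℂ) + (3 / 2 : ℝ)) * f (n + 2))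
  rw [norm_mul, norm_mul, norm_natCast_add_of_nonneg n (by norm_num),
    norm_natCast_add_of_nonneg n (by norm_num)] at hsub
  rw [hA, norm_mul, norm_div, Complex.norm_I, Complex.norm_two]
  nlinarith [norm_nonneg (f n)]

lemma norm_aN_aN_le (f : ℕ → ℂ) (n : ℕ) :
    ‖aN (aN f) n‖ ≤ ((n : ℝ) + 1 / 2) ^ 2 * (‖extend (· + 2) f 0 n‖ + ‖f n‖ + ‖f (n + 2)‖) := by
  match n with
  | 0 =>
    have hext : extend (· + 2) f 0 0 = 0 := extend_apply' _ _ _ (by simp)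
    have h1 := norm_aN_succ_le f 0
    rw [norm_aN_zero, hext]
    norm_num at h1 ⊢
    linarith [norm_nonneg (f 0), norm_nonneg (f 2)]
  | 1 =>
    have hext : extend (· + 2) f 0 1 = 0 := extend_apply' _ _ _ (by simp)
    have h1 := norm_aN_succ_le (aN f) 0
    have h2 := norm_aN_succ_le f 1
    rw [norm_aN_zero] at h1
    rw [hext]
    norm_num at h1 h2 ⊢
    nlinarith [norm_nonneg (f 1), norm_nonneg (f 3)]
  | k + 2 =>
    have hext : extend (· + 2) f 0 (k + 2) = f k := (add_left_injective 2).extend_apply f 0 k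
    have h1 := norm_aN_succ_le (aN f) (k + 1)
    have h2 := norm_aN_succ_le f k
    have h3 := norm_aN_succ_le f (k + 2)
    simp only [add_assoc, Nat.reduceAdd, Nat.cast_add, Nat.cast_ofNat, Nat.cast_one] at h1 h3 ⊢
    norm_num at h1 h3 ⊢
    rw [hext]
    set x := ‖f k‖
    set y := ‖f (k + 2)‖
    set z := ‖f (k + 4)‖
    have hcoef : ((k : ℝ) + 7 / 2) / 4 * (x + 2 * y + z) ≤ ((k : ℝ) + 5 / 2) * (x + (y + z)) := by
      nlinarith [norm_nonneg (f k), norm_nonneg (f (k + 2)), norm_nonneg (f (k + 4))]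
    calc ‖aN (aN f) (k + 2)‖
        ≤ ((k : ℝ) + 5 / 2) / 2
            * (((k : ℝ) + 7 / 2) / 2 * (x + y) + ((k : ℝ) + 7 / 2) / 2 * (y + z)) := by
          refine h1.trans ?_
          gcongr
          exact h2.trans (by gcongr; linarith)
      _ = ((k : ℝ) + 5 / 2) * (((k : ℝ) + 7 / 2) / 4 * (x + 2 * y + z)) := by ring
      _ ≤ ((k : ℝ) + 5 / 2) * (((k : ℝ) + 5 / 2) * (x + (y + z))) := by gcongr
      _ = ((k : ℝ) + 5 / 2) ^ 2 * (x + (y + z)) := by ring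

lemma aN_const_mul (c : ℂ) (f : ℕ → ℂ) : aN (fun k => c * f k) = fun n => c * aN f n := by
  funext n
  simp only [aN]
  split_ifs <;> ring

/-- `A_ℕ ⊗ 1` on `ℕ × V₂`. -/
def aNProd {V₂ : Type*} (f : ℕ × V₂ → ℂ) : ℕ × V₂ → ℂ := fun v =>
  aN (fun n => f (n, v.2)) v.1

lemma emb_mF_aGF {V₂ : Type*} (m₂ : ℝ) (f : ℕ × V₂ → ℂ) :
    emb (mF V₂ m₂) (aGF f) = aNProd (emb (mF V₂ m₂) f) := by
  funext ⟨n, y⟩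
  have hsqrt : ∀ k : ℕ, ((√(mF V₂ m₂ (k, y)) : ℝ) : ℂ) = √m₂ * √(Real.exp k) := fun k => by
    rw [mF, Real.sqrt_mul (Real.exp_nonneg _), Complex.ofReal_mul, mul_comm]
  have hexp : ((√(Real.exp n) : ℝ) : ℂ) ≠ 0 :=
    Complex.ofReal_ne_zero.2 (Real.sqrt_pos.2 (Real.exp_pos _)).ne'
  simp only [emb, aNProd, aGF, aM1F]
  unfold Tw
  simp only [m1F, div_one, one_div, Real.sqrt_inv, Complex.ofReal_inv, hsqrt, mul_assoc,
    aN_const_mul]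
  field_simp

lemma emb_lamFinv2 {V₂ : Type*} (m : ℕ × V₂ → ℝ) (f : ℕ × V₂ → ℂ) :
    emb m (lamFinv2 f) = lamFinv2 (emb m f) := by
  funext v
  simp only [emb, lamFinv2]
  ring

lemma emb_mF_lamFinv2_aGF_aGF {V₂ : Type*} (m₂ : ℝ) (f : ℕ × V₂ → ℂ) :
    emb (mF V₂ m₂) (lamFinv2 (aGF (aGF f))) = lamFinv2 (aNProd (aNProd (emb (mF V₂ m₂) f))) := by
  rw [emb_lamFinv2, emb_mF_aGF, emb_mF_aGF]

lemma norm_lamFinv2_aNProd_aNProd_le {V₂ : Type*} (g : ℕ × V₂ → ℂ) (v : ℕ × V₂) :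
    ‖lamFinv2 (aNProd (aNProd g)) v‖
      ≤ ‖extend (Prod.map (· + 2) id) g 0 v‖ + ‖g v‖ + ‖g (Prod.map (· + 2) id v)‖ := by
  obtain ⟨n, y⟩ := v
  have hpos : (0 : ℝ) < ((n : ℝ) + 1 / 2) ^ 2 := by positivity
  have h := norm_aN_aN_le (fun k => g (k, y)) n
  rw [← extend_prodMap_id_apply (add_left_injective 2)] at h
  rw [lamFinv2, norm_mul, Complex.norm_real, Real.norm_of_nonneg (by positivity),
    inv_mul_le_iff₀ hpos]
  exact h

lemma summable_and_tsum_norm_lamFinv2_aNProd_aNProd_sq_le {V₂ : Type*} {g : ℕ × V₂ → ℂ}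
    (hg : Summable fun v => ‖g v‖ ^ 2) :
    Summable (fun v => ‖lamFinv2 (aNProd (aNProd g)) v‖ ^ 2) ∧
      ∑' v, ‖lamFinv2 (aNProd (aNProd g)) v‖ ^ 2 ≤ 9 * ∑' v, ‖g v‖ ^ 2 :=
  summable_norm_sq_and_tsum_le_of_norm_le_shifts ((add_left_injective 2).prodMap injective_id) hg
    (norm_lamFinv2_aNProd_aNProd_le g)

lemma lamFinv2_aNProd_aNProd_add {V₂ : Type*} (g h : ℕ × V₂ → ℂ) :
    lamFinv2 (aNProd (aNProd (g + h)))
      = lamFinv2 (aNProd (aNProd g)) + lamFinv2 (aNProd (aNProd h)) := by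
  funext v
  simp only [lamFinv2, aNProd, aN, Pi.add_apply]
  split_ifs <;> ring

lemma lamFinv2_aNProd_aNProd_smul {V₂ : Type*} (c : ℂ) (g : ℕ × V₂ → ℂ) :
    lamFinv2 (aNProd (aNProd (c • g))) = c • lamFinv2 (aNProd (aNProd g)) := by
  funext v
  simp only [lamFinv2, aNProd, aN, Pi.smul_apply, smul_eq_mul]
  split_ifs <;> ring

def lamFinv2ANProdSqLinear (V₂ : Type*) : L2 (ℕ × V₂) →ₗ[ℂ] L2 (ℕ × V₂) where
  toFun g := ⟨lamFinv2 (aNProd (aNProd g)), memℓp_two_iff_summable_norm_sq.2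
    (summable_and_tsum_norm_lamFinv2_aNProd_aNProd_sq_le
      (memℓp_two_iff_summable_norm_sq.1 (lp.memℓp g))).1⟩
  map_add' g h := lp.ext (lamFinv2_aNProd_aNProd_add g h)
  map_smul' c g := lp.ext (lamFinv2_aNProd_aNProd_smul c g)

lemma norm_lamFinv2ANProdSqLinear_le {V₂ : Type*} (g : L2 (ℕ × V₂)) :
    ‖lamFinv2ANProdSqLinear V₂ g‖ ≤ 3 * ‖g‖ := by
  have hbound := (summable_and_tsum_norm_lamFinv2_aNProd_aNProd_sq_le
    (memℓp_two_iff_summable_norm_sq.1 (lp.memℓp g))).2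
  apply le_of_sq_le_sq _ (by positivity)
  rw [mul_pow, lp.norm_sq_eq_tsum_norm_sq, lp.norm_sq_eq_tsum_norm_sq]
  exact hbound.trans_eq (by norm_num)

def lamFinv2ANProdSqCLM (V₂ : Type*) : L2 (ℕ × V₂) →L[ℂ] L2 (ℕ × V₂) :=
  (lamFinv2ANProdSqLinear V₂).mkContinuous 3 norm_lamFinv2ANProdSqLinear_le

theorem stmt16_general {V₂ : Type*} (m₂ : ℝ) (hm₂ : 0 < m₂) :
    (∃ C > 0, ∀ f : ℕ × V₂ → ℂ, (Function.support f).Finite →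
      nrm (mF V₂ m₂) (lamFinv2 (aGF (aGF f))) ≤ C * nrm (mF V₂ m₂) f) ∧
    (∃ T : L2 (ℕ × V₂) →L[ℂ] L2 (ℕ × V₂),
      ∀ g : L2 (ℕ × V₂), (Function.support (g : ℕ × V₂ → ℂ)).Finite →
        ((T g : ℕ × V₂ → ℂ)
          = emb (mF V₂ m₂) (lamFinv2 (aGF (aGF (unemb (mF V₂ m₂) g)))))) := by
  have hm : ∀ v, 0 < mF V₂ m₂ v := fun v => mul_pos (Real.exp_pos _) hm₂
  refine ⟨⟨3, by norm_num, fun f hf => ?_⟩, ⟨lamFinv2ANProdSqCLM V₂, fun g _ => ?_⟩⟩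
  · set g := emb (mF V₂ m₂) f
    have hg : Summable fun v => ‖g v‖ ^ 2 := summable_of_hasFiniteSupport <| hf.subset
      fun v hv => by simp_all [g, emb]
    rw [nrm_eq_sqrt_tsum_norm_emb_sq (fun v => (hm v).le),
      nrm_eq_sqrt_tsum_norm_emb_sq (fun v => (hm v).le), emb_mF_lamFinv2_aGF_aGF]
    have hbound := (summable_and_tsum_norm_lamFinv2_aNProd_aNProd_sq_le hg).2
    calc √(∑' v, ‖lamFinv2 (aNProd (aNProd g)) v‖ ^ 2) ≤ √(3 ^ 2 * ∑' v, ‖g v‖ ^ 2) :=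
          Real.sqrt_le_sqrt (by linarith)
      _ = 3 * √(∑' v, ‖g v‖ ^ 2) := by
          rw [Real.sqrt_mul' _ (tsum_nonneg fun _ => by positivity), Real.sqrt_sq (by norm_num)]
  · rw [emb_mF_lamFinv2_aGF_aGF, emb_unemb hm]
    rfl

/-- **Bound `‖(Λ^f)^{−2}A_{G^f}² f‖ ≤ C·‖f‖` on `ℓ²(ℕ×V₂, m^f)`; hence
`(Λ^f)^{−2}A_{G^f}²` extends to a bounded operator on `ℓ²(ℕ×V₂, m^f)`.** -/
theorem stmt16 {V₂ : Type*} [Fintype V₂] (m₂ : ℝ) (hm₂ : 0 < m₂) :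
    (∃ C > 0, ∀ f : ℕ × V₂ → ℂ, (Function.support f).Finite →
      nrm (mF V₂ m₂) (lamFinv2 (aGF (aGF f))) ≤ C * nrm (mF V₂ m₂) f) ∧
    (∃ T : L2 (ℕ × V₂) →L[ℂ] L2 (ℕ × V₂),
      ∀ g : L2 (ℕ × V₂), (Function.support (g : ℕ × V₂ → ℂ)).Finite →
        ((T g : ℕ × V₂ → ℂ)
          = emb (mF V₂ m₂) (lamFinv2 (aGF (aGF (unemb (mF V₂ m₂) g)))))) :=
  stmt16_general m₂ hm₂
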